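/- Let m ≥ 1, let U' ⊆ ℂ^m be open with s₀ ∈ U', and let u : U' → U and ξ : U' → (ℂ^{N+1})* be maps of class C^∞ such that ξ(s)(x̂^I(u(s))) = 0 for all s ∈ U' and all multi-indices I ∈ ℕ^k with |I| ≤ t (i.e., s ↦ ξ(s) is a family of hyperplanes of the t-th dual variety of V containing the t-th osculating spaces along s ↦ x(u(s))). Then for all multi-indices J ∈ ℕ^m and I ∈ ℕ^k with |J| + |I| ≤ t one has (∂^J ξ)(s₀)(x̂^I(u(s₀))) = 0. In particular: every tangent vector to the t-th dual variety at ξ(s₀) annihilates T^(t−1)(u(s₀)) (i.e. T̃^(t−1)_P(V) ⊆ C^(1)_{t,P}(V)), and every derivative ∂^J ξ(s₀) with |J| ≤ t vanishes at x̂(u(s₀)) (i.e. P ∈ C^(s)_{t,P}(V) for s ≤ t). -/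

import Mathlib

/-!
Differentiating the identity `ξ(s)(∂^M x̂(u(s))) = 0` in a direction `a` of `s` gives, by the
product and chain rules,
`(∂_a ξ)(s)(∂^M x̂(u(s))) = -∑_j (∂_a u_j)(s) · ξ(s)(∂_j ∂^M x̂(u(s)))`,
so one derivative of `ξ` can be traded for one more derivative of `x̂`. Repeating this `|J|` times
reduces `(∂^J ξ)(s)(∂^I x̂(u(s)))` to the hypothesis, which applies since `|J| + |I| ≤ t`.
Equality of mixed partials is what lets a derivative in an arbitrary order of directions be read
as a multi-index derivative `x̂^I`.
-/

/- Common setup: iterated partial derivatives, multi-indices, osculating spaces,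
fundamental forms for a local parametrisation `x : ℂ^k → ℂ^N` of a variety
`V ⊂ ℙ^N`, lifted to `x̂ = (1, x) : ℂ^k → ℂ^{N+1}`. -/

open scoped BigOperators

noncomputable section

/-- Iterated partial derivative of `f` along a list of coordinate directions. -/
def pderivList {k : ℕ} {E : Type} [NormedAddCommGroup E] [NormedSpace ℂ E] :
    List (Fin k) → ((Fin k → ℂ) → E) → ((Fin k → ℂ) → E)
  | [], f => f
  | j :: L, f => fun u => fderiv ℂ (pderivList L f) u (Pi.single j 1)

/-- The canonical list of coordinate directions attached to a multi-index `I : Fin k → ℕ`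
(the direction `j` repeated `I j` times). -/
def idxList {k : ℕ} (I : Fin k → ℕ) : List (Fin k) :=
  (List.finRange k).flatMap fun j => List.replicate (I j) j

/-- The partial derivative `∂^I f = ∂^{|I|} f / ∂u₁^{i₁} ⋯ ∂u_k^{i_k}`. -/
def pd {k : ℕ} {E : Type} [NormedAddCommGroup E] [NormedSpace ℂ E]
    (I : Fin k → ℕ) (f : (Fin k → ℂ) → E) : (Fin k → ℂ) → E :=
  pderivList (idxList I) f

/-- The finset of multi-indices `I : Fin k → ℕ` of total degree `|I| ≤ r`. -/
def degLE (k r : ℕ) : Finset (Fin k → ℕ) :=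
  (Finset.Iic fun _ : Fin k => r).filter fun I => (∑ j, I j) ≤ r

/-- The finset of multi-indices `I : Fin k → ℕ` of total degree `|I| = r`. -/
def degEq (k r : ℕ) : Finset (Fin k → ℕ) :=
  (Finset.Iic fun _ : Fin k => r).filter fun I => (∑ j, I j) = r

/-- The lift `x̂(u) = (1, x(u))` of the parametrisation `x` to the affine cone `ℂ^{N+1}`. -/
def coneLift {k N : ℕ} (x : (Fin k → ℂ) → (Fin N → ℂ)) : (Fin k → ℂ) → (Fin (N + 1) → ℂ) :=
  fun u => Fin.cons 1 (x u)

/-- `osc x̂ s u` is the affine cone `T^(s)(u)` over the `s`-th osculating space at the point of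
parameter `u`: the span of all partial derivatives `x̂^I(u)` with `|I| ≤ s`. -/
def osc {k N : ℕ} (xhat : (Fin k → ℂ) → (Fin (N + 1) → ℂ)) (s : ℕ) (u : Fin k → ℂ) :
    Submodule ℂ (Fin (N + 1) → ℂ) :=
  Submodule.span ℂ {y | ∃ I : Fin k → ℕ, (∑ j, I j) ≤ s ∧ y = pd I xhat u}

/-- The degree-`r` form `F^r_ξ(v) = ξ(D^r x̂(u₀)(v,…,v))`, as a function of `v ∈ ℂ^k`. -/
def formOf {k N : ℕ} (xhat : (Fin k → ℂ) → (Fin (N + 1) → ℂ)) (u₀ : Fin k → ℂ) (r : ℕ)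
    (ξ : Module.Dual ℂ (Fin (N + 1) → ℂ)) : (Fin k → ℂ) → ℂ :=
  fun v => ξ (iteratedFDeriv ℂ r xhat u₀ fun _ => v)

/-- The `r`-th fundamental form `|I^r|` of `V` at `P`, as the set of the forms `F^r_ξ` for `ξ`
a linear functional vanishing on `T^(r-1)(u₀)`. -/
def fundSet {k N : ℕ} (xhat : (Fin k → ℂ) → (Fin (N + 1) → ℂ)) (u₀ : Fin k → ℂ) (r : ℕ) :
    Set ((Fin k → ℂ) → ℂ) :=
  { F | ∃ ξ : Module.Dual ℂ (Fin (N + 1) → ℂ),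
      (∀ y ∈ osc xhat (r - 1) u₀, ξ y = 0) ∧ F = formOf xhat u₀ r ξ }

/-- The `r`-th fundamental form `|I^r|` as a subspace of the space of functions of `v`. -/
def fundForm {k N : ℕ} (xhat : (Fin k → ℂ) → (Fin (N + 1) → ℂ)) (u₀ : Fin k → ℂ) (r : ℕ) :
    Submodule ℂ ((Fin k → ℂ) → ℂ) :=
  Submodule.span ℂ (fundSet xhat u₀ r)

/-- The linear map sending the coefficients `(E_I)_{|I|=t}` of a degree-`t` form to
`∑_{|I|=t} E_I x̂^I(u₀) ∈ ℂ^{N+1}`; a form is the symbol of a Laplace equation of order `t`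
iff its coefficients are mapped into `T^(t-1)(u₀)`. -/
def symbolMap {k N : ℕ} (xhat : (Fin k → ℂ) → (Fin (N + 1) → ℂ)) (u₀ : Fin k → ℂ) (t : ℕ) :
    ({I : Fin k → ℕ // I ∈ degEq k t} → ℂ) →ₗ[ℂ] (Fin (N + 1) → ℂ) where
  toFun E := ∑ I : {I : Fin k → ℕ // I ∈ degEq k t}, E I • pd I.1 xhat u₀
  map_add' a b := by simp [add_smul, Finset.sum_add_distrib]
  map_smul' c a := by simp [smul_smul, Finset.smul_sum]

/-- The parametrisation `Φ_t(u, λ) = ∑_{|I| ≤ t} λ_I x̂^I(u)` of the affine cone over the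
`t`-th osculating variety `Tan^t(V)`. -/
def tanPhi {k N : ℕ} (xhat : (Fin k → ℂ) → (Fin (N + 1) → ℂ)) (t : ℕ) :
    ((Fin k → ℂ) × ({I : Fin k → ℕ // I ∈ degLE k t} → ℂ)) → (Fin (N + 1) → ℂ) :=
  fun p => ∑ I : {I : Fin k → ℕ // I ∈ degLE k t}, p.2 I • pd I.1 xhat p.1

/-- The rank of the Jacobian matrix of a linear system `S` of degree-`r` forms:
the maximum over `v ∈ ℂ^k` of the dimension of the span of the gradients at `v`
of the members of `S`. -/
def jacRank (k : ℕ) (S : Set ((Fin k → ℂ) → ℂ)) : ℕ :=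
  sSup {r : ℕ | ∃ v : Fin k → ℂ,
    r = Module.finrank ℂ
      ↥(Submodule.span ℂ {g : Fin k → ℂ | ∃ F ∈ S, g = fun j => pd (Pi.single j 1) F v})}

/-- The coefficients of the reducible degree-`(t+1)` form
`(∑_j w_j v_j) · (∑_{|I| = t} λ_I v^I)`. -/
def prodSymb {k : ℕ} (t : ℕ) (w : Fin k → ℂ) (lam : {I : Fin k → ℕ // I ∈ degLE k t} → ℂ)
    (J : Fin k → ℕ) : ℂ :=
  ∑ j : Fin k,
    if h : 1 ≤ J j ∧ (J - Pi.single j 1 : Fin k → ℕ) ∈ degLE k t ∧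
        (∑ i, (J - Pi.single j 1 : Fin k → ℕ) i) = t
    then w j * lam ⟨(J - Pi.single j 1 : Fin k → ℕ), h.2.1⟩ else 0

open Filter Topology
open scoped ContDiff

section DotProduct

variable {𝕜 : Type*} [NontriviallyNormedField 𝕜] {E : Type*} [NormedAddCommGroup E]
  [NormedSpace 𝕜 E] {ι : Type*} [Fintype ι]

theorem HasFDerivAt.dotProduct {f g : E → ι → 𝕜} {f' g' : E →L[𝕜] ι → 𝕜} {x : E}
    (hf : HasFDerivAt f f' x) (hg : HasFDerivAt g g' x) :
    HasFDerivAt (fun y => f y ⬝ᵥ g y)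
      (∑ i, (f x i • (ContinuousLinearMap.proj i).comp g'
        + g x i • (ContinuousLinearMap.proj i).comp f')) x :=
  HasFDerivAt.fun_sum fun i _ => (hasFDerivAt_pi'.1 hf i).mul (hasFDerivAt_pi'.1 hg i)

theorem fderiv_dotProduct_eq_neg_of_eventuallyEq_zero {f g : E → ι → 𝕜} {x : E}
    (hf : DifferentiableAt 𝕜 f x) (hg : DifferentiableAt 𝕜 g x)
    (h0 : (fun y => f y ⬝ᵥ g y) =ᶠ[𝓝 x] 0) (v : E) :
    fderiv 𝕜 f x v ⬝ᵥ g x = -(f x ⬝ᵥ fderiv 𝕜 g x v) := by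
  have hD := (hf.hasFDerivAt.dotProduct hg.hasFDerivAt).unique
    ((hasFDerivAt_const (0 : 𝕜) x).congr_of_eventuallyEq h0)
  have hDv := congrArg (· v) hD
  simp only [Finset.sum_add_distrib, add_apply, sum_apply, smul_apply,
    ContinuousLinearMap.comp_apply, ContinuousLinearMap.proj_apply, smul_eq_mul,
    zero_apply] at hDv
  rw [dotProduct_comm, eq_neg_iff_add_eq_zero, add_comm]
  exact hDv

end DotProduct

section PartialDerivatives

variable {k : ℕ} {E : Type} [NormedAddCommGroup E] [NormedSpace ℂ E] {U : Set (Fin k → ℂ)}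
  {f : (Fin k → ℂ) → E}

theorem contDiffOn_pderivList (hU : IsOpen U) (hf : ContDiffOn ℂ ∞ f U) (L : List (Fin k)) :
    ContDiffOn ℂ ∞ (pderivList L f) U := by
  induction L with
  | nil => exact hf
  | cons j L ih => exact (ih.fderiv_of_isOpen hU (by simp)).clm_apply contDiffOn_const

theorem differentiableAt_pderivList (hU : IsOpen U) (hf : ContDiffOn ℂ ∞ f U)
    (L : List (Fin k)) {x : Fin k → ℂ} (hx : x ∈ U) :
    DifferentiableAt ℂ (pderivList L f) x :=
  ((contDiffOn_pderivList hU hf L).differentiableOn (by simp) x hx).differentiableAt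
    (hU.mem_nhds hx)

theorem fderiv_pderivList_apply (M : List (Fin k)) (x w : Fin k → ℂ) :
    fderiv ℂ (pderivList M f) x w = ∑ j, w j • pderivList (j :: M) f x := by
  conv_lhs => rw [← Finset.univ_sum_single w, map_sum]
  refine Finset.sum_congr rfl fun j _ => ?_
  show _ = w j • fderiv ℂ (pderivList M f) x (Pi.single j 1)
  rw [← map_smul, ← Pi.single_smul', smul_eq_mul, mul_one]

theorem pderivList_cons_cons_comm (hU : IsOpen U) (hf : ContDiffOn ℂ ∞ f U) (a b : Fin k)
    (L : List (Fin k)) {x : Fin k → ℂ} (hx : x ∈ U) :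
    pderivList (a :: b :: L) f x = pderivList (b :: a :: L) f x := by
  set g := pderivList L f
  have hg : ContDiffAt ℂ ∞ g x := (contDiffOn_pderivList hU hf L).contDiffAt (hU.mem_nhds hx)
  have hg' : DifferentiableAt ℂ (fderiv ℂ g) x :=
    (hg.fderiv_right (m := 1) (WithTop.coe_le_coe.2 le_top)).differentiableAt one_ne_zero
  show fderiv ℂ (fun y => fderiv ℂ g y (Pi.single b 1)) x (Pi.single a 1)
      = fderiv ℂ (fun y => fderiv ℂ g y (Pi.single a 1)) x (Pi.single b 1)
  simp only [fderiv_clm_apply hg' (differentiableAt_const _), fderiv_fun_const, Pi.zero_apply,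
    ContinuousLinearMap.comp_zero, zero_add, ContinuousLinearMap.flip_apply]
  exact hg.isSymmSndFDerivAt
    (by rw [minSmoothness_of_isRCLikeNormedField]; exact WithTop.coe_le_coe.2 le_top) _ _

theorem pderivList_eq_of_perm (hU : IsOpen U) (hf : ContDiffOn ℂ ∞ f U) {M M' : List (Fin k)}
    (hp : M.Perm M') {x : Fin k → ℂ} (hx : x ∈ U) : pderivList M f x = pderivList M' f x := by
  induction hp generalizing x with
  | nil => rfl
  | cons a _ ih =>
    show fderiv ℂ _ x _ = fderiv ℂ _ x _
    rw [(eventuallyEq_of_mem (hU.mem_nhds hx) fun y hy => ih hy).fderiv_eq]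
  | swap a b L => exact pderivList_cons_cons_comm hU hf b a L hx
  | trans _ _ ih₁ ih₂ => rw [ih₁ hx, ih₂ hx]

theorem idxList_length (I : Fin k → ℕ) : (idxList I).length = ∑ j, I j := by
  simp [idxList, Fin.sum_univ_def]

theorem idxList_count (I : Fin k → ℕ) (a : Fin k) : (idxList I).count a = I a := by
  simp only [idxList, List.count_flatMap, Function.comp_def, List.count_replicate]
  rw [← Fin.sum_univ_def (fun j => if (j == a) = true then I j else 0)]
  simp

theorem idxList_count_perm (M : List (Fin k)) : (idxList fun j => M.count j).Perm M :=
  List.perm_iff_count.2 (idxList_count _)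

theorem pderivList_eq_pd_count (hU : IsOpen U) (hf : ContDiffOn ℂ ∞ f U) (M : List (Fin k))
    {x : Fin k → ℂ} (hx : x ∈ U) : pderivList M f x = pd (fun j => M.count j) f x :=
  (pderivList_eq_of_perm hU hf (idxList_count_perm M) hx).symm

theorem sum_count_eq_length (M : List (Fin k)) : ∑ j, M.count j = M.length := by
  rw [← idxList_length]
  exact (idxList_count_perm M).length_eq

end PartialDerivatives

theorem contDiffOn_coneLift {k N : ℕ} {U : Set (Fin k → ℂ)} {x : (Fin k → ℂ) → (Fin N → ℂ)}
    (hx : ContDiffOn ℂ ∞ x U) : ContDiffOn ℂ ∞ (coneLift x) U := by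
  refine contDiffOn_pi.2 fun i => ?_
  induction i using Fin.cases with
  | zero => simpa [coneLift] using contDiffOn_const
  | succ j => simpa [coneLift] using contDiffOn_pi.1 hx j

section DualFamily

variable {k m n : ℕ} {U : Set (Fin k → ℂ)} {U' : Set (Fin m → ℂ)}
  {xhat : (Fin k → ℂ) → Fin n → ℂ} {u : (Fin m → ℂ) → Fin k → ℂ} {ξ : (Fin m → ℂ) → Fin n → ℂ}

theorem dotProduct_pderivList_eq_zero_of_forall_pd (hU : IsOpen U) (hxhat : ContDiffOn ℂ ∞ xhat U)
    (humaps : Set.MapsTo u U' U) {t : ℕ}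
    (hvan : ∀ s ∈ U', ∀ I : Fin k → ℕ, ∑ j, I j ≤ t → ξ s ⬝ᵥ pd I xhat (u s) = 0)
    {s : Fin m → ℂ} (hs : s ∈ U') {M : List (Fin k)} (hM : M.length ≤ t) :
    ξ s ⬝ᵥ pderivList M xhat (u s) = 0 := by
  rw [pderivList_eq_pd_count hU hxhat M (humaps hs)]
  exact hvan s hs _ (sum_count_eq_length M ▸ hM)

theorem pderivList_singleton_dotProduct_eq_zero (hU : IsOpen U) (hU' : IsOpen U')
    (hxhat : ContDiffOn ℂ ∞ xhat U) (hu : DifferentiableOn ℂ u U') (humaps : Set.MapsTo u U' U)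
    (hξ : DifferentiableOn ℂ ξ U') {r : ℕ}
    (hvan : ∀ s ∈ U', ∀ M : List (Fin k), M.length ≤ r + 1 →
      ξ s ⬝ᵥ pderivList M xhat (u s) = 0)
    (a : Fin m) {s : Fin m → ℂ} (hs : s ∈ U') {M : List (Fin k)} (hM : M.length ≤ r) :
    pderivList [a] ξ s ⬝ᵥ pderivList M xhat (u s) = 0 := by
  have hus : DifferentiableAt ℂ u s := hu.differentiableAt (hU'.mem_nhds hs)
  have hg : DifferentiableAt ℂ (pderivList M xhat ∘ u) s :=
    (differentiableAt_pderivList hU hxhat M (humaps hs)).comp s hus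
  have hloc : (fun s' => ξ s' ⬝ᵥ (pderivList M xhat ∘ u) s') =ᶠ[𝓝 s] 0 :=
    eventuallyEq_of_mem (hU'.mem_nhds hs) fun s' hs' => hvan s' hs' M (by omega)
  calc pderivList [a] ξ s ⬝ᵥ pderivList M xhat (u s)
      = -(ξ s ⬝ᵥ fderiv ℂ (pderivList M xhat ∘ u) s (Pi.single a 1)) :=
        fderiv_dotProduct_eq_neg_of_eventuallyEq_zero (hξ.differentiableAt (hU'.mem_nhds hs))
          hg hloc _
    _ = -∑ j, fderiv ℂ u s (Pi.single a 1) j * (ξ s ⬝ᵥ pderivList (j :: M) xhat (u s)) := by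
        rw [fderiv_comp s (differentiableAt_pderivList hU hxhat M (humaps hs)) hus,
          ContinuousLinearMap.comp_apply, fderiv_pderivList_apply, dotProduct_sum]
        simp only [dotProduct_smul, smul_eq_mul]
    _ = 0 := by
        simp [hvan s hs (_ :: M) (by simp; omega)]

theorem pderivList_dotProduct_pderivList_eq_zero (hU : IsOpen U) (hU' : IsOpen U')
    (hxhat : ContDiffOn ℂ ∞ xhat U) (hu : DifferentiableOn ℂ u U') (humaps : Set.MapsTo u U' U)
    (hξ : ContDiffOn ℂ ∞ ξ U') (L : List (Fin m)) {r : ℕ}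
    (hvan : ∀ s ∈ U', ∀ M : List (Fin k), M.length ≤ r + L.length →
      ξ s ⬝ᵥ pderivList M xhat (u s) = 0)
    {s : Fin m → ℂ} (hs : s ∈ U') {M : List (Fin k)} (hM : M.length ≤ r) :
    pderivList L ξ s ⬝ᵥ pderivList M xhat (u s) = 0 := by
  induction L generalizing r s M with
  | nil => exact hvan s hs M (by simpa using hM)
  | cons a L ih =>
    have hL : ∀ s ∈ U', ∀ M : List (Fin k), M.length ≤ r + 1 →
        pderivList L ξ s ⬝ᵥ pderivList M xhat (u s) = 0 := fun s hs M hM =>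
      ih (r := r + 1) (fun s hs M hM => hvan s hs M (by simp at hM ⊢; omega)) hs hM
    exact pderivList_singleton_dotProduct_eq_zero hU hU' hxhat hu humaps
      ((contDiffOn_pderivList hU' hξ L).differentiableOn (by simp)) hL a hs hM

end DualFamily

theorem deriv_of_dual_family_annihilates_general (k N t : ℕ)
    (U : Set (Fin k → ℂ)) (hU : IsOpen U)
    (x : (Fin k → ℂ) → (Fin N → ℂ)) (hx : ContDiffOn ℂ (⊤ : ℕ∞) x U)
    (m : ℕ) (U' : Set (Fin m → ℂ)) (hU' : IsOpen U')
    (s₀ : Fin m → ℂ) (hs₀ : s₀ ∈ U')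
    (u : (Fin m → ℂ) → (Fin k → ℂ)) (hu : ContDiffOn ℂ (⊤ : ℕ∞) u U')
    (humaps : Set.MapsTo u U' U)
    (ξ : (Fin m → ℂ) → (Fin (N + 1) → ℂ)) (hξ : ContDiffOn ℂ (⊤ : ℕ∞) ξ U')
    (hvan : ∀ s ∈ U', ∀ I : Fin k → ℕ, (∑ j, I j) ≤ t →
      (∑ i, ξ s i * pd I (coneLift x) (u s) i) = 0) :
    ∀ J : Fin m → ℕ, ∀ I : Fin k → ℕ, (∑ a, J a) + (∑ j, I j) ≤ t →
      (∑ i, pd J ξ s₀ i * pd I (coneLift x) (u s₀) i) = 0 := by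
  intro J I hJI
  have hxhat := contDiffOn_coneLift hx
  refine pderivList_dotProduct_pderivList_eq_zero hU hU' hxhat (hu.differentiableOn (by simp))
    humaps hξ (idxList J) (r := ∑ j, I j) (fun s hs M hM => ?_) hs₀ (idxList_length I).le
  exact dotProduct_pderivList_eq_zero_of_forall_pd hU hxhat humaps hvan hs
    (by rw [idxList_length] at hM; omega)

/-- If `s ↦ ξ(s)` is a smooth family of linear functionals annihilating all `x̂^I(u(s))`,
`|I| ≤ t`, along a smooth family of points, then `(∂^J ξ)(s₀)(x̂^I(u(s₀))) = 0` whenever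
`|J| + |I| ≤ t`; in particular `T̃^(t-1)_P(V) ⊆ C^(1)_{t,P}(V)` and `P ∈ C^(s)_{t,P}(V)`. -/
theorem deriv_of_dual_family_annihilates (k N t : ℕ) (hk : 1 ≤ k) (hN : 1 ≤ N) (ht : 1 ≤ t)
    (U : Set (Fin k → ℂ)) (hU : IsOpen U) (u₀ : Fin k → ℂ) (hu₀ : u₀ ∈ U)
    (x : (Fin k → ℂ) → (Fin N → ℂ)) (hx : ContDiffOn ℂ (⊤ : ℕ∞) x U)
    (m : ℕ) (hm : 1 ≤ m) (U' : Set (Fin m → ℂ)) (hU' : IsOpen U')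
    (s₀ : Fin m → ℂ) (hs₀ : s₀ ∈ U')
    (u : (Fin m → ℂ) → (Fin k → ℂ)) (hu : ContDiffOn ℂ (⊤ : ℕ∞) u U')
    (humaps : Set.MapsTo u U' U)
    (ξ : (Fin m → ℂ) → (Fin (N + 1) → ℂ)) (hξ : ContDiffOn ℂ (⊤ : ℕ∞) ξ U')
    (hvan : ∀ s ∈ U', ∀ I : Fin k → ℕ, (∑ j, I j) ≤ t →
      (∑ i, ξ s i * pd I (coneLift x) (u s) i) = 0) :
    ∀ J : Fin m → ℕ, ∀ I : Fin k → ℕ, (∑ a, J a) + (∑ j, I j) ≤ t →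
      (∑ i, pd J ξ s₀ i * pd I (coneLift x) (u s₀) i) = 0 :=
  deriv_of_dual_family_annihilates_general k N t U hU x hx m U' hU' s₀ hs₀ u hu humaps ξ hξ hvan
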